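/- For all real numbers a with 0 ≤ a ≤ 1/2 and b with 0 < b ≤ 1, the function ω(a,b) = a(1-a)/(1-a+a²+b²) satisfies ω(a,b) ≤ 4a(1-a)(7-4b²)/21, (1-2a)/2 ≤ ∂ω/∂a ≤ 4(1-2a)(2-b²+5a(1-a))/7, ∂²ω/∂a² ≥ -2(11a(1-a)+2b²)/(7b²), -1/(6b) ≤ ∂ω/∂b ≤ -a(1-a)b/2, and ∂²ω/∂b² ≥ -(24-64a(1-a)-17b²)/(44b²). -/

import Mathlib

noncomputable def omegaFn (a b : ℝ) : ℝ := a * (1 - a) / (1 - a + a^2 + b^2)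

lemma Dpos (a b : ℝ) : 0 < 1 - a + a^2 + b^2 := by nlinarith [sq_nonneg (a - 1/2), sq_nonneg b]

lemma hda1 (b : ℝ) (x : ℝ) : HasDerivAt (fun x => omegaFn x b)
    ((1 - 2*x)*(1 + b^2)/(1 - x + x^2 + b^2)^2) x := by
  have hD := (Dpos x b).ne'
  have h1 : HasDerivAt (fun x : ℝ => x * (1 - x)) (1 - 2*x) x := by
    have := (hasDerivAt_id x).mul ((hasDerivAt_const x (1:ℝ)).sub (hasDerivAt_id x))
    exact this.congr_deriv (by simp [id]; ring)
  have h2 : HasDerivAt (fun x : ℝ => 1 - x + x^2 + b^2) (-1 + 2*x) x := by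
    have := (((hasDerivAt_const x (1:ℝ)).sub (hasDerivAt_id x)).add
      (hasDerivAt_pow 2 x)).add (hasDerivAt_const x (b^2))
    exact this.congr_deriv (by push_cast; ring)
  have := h1.div h2 hD
  refine this.congr_deriv ?_
  field_simp
  ring

lemma deriv1 (a b : ℝ) : deriv (fun x => omegaFn x b) a
    = (1 - 2*a)*(1 + b^2)/(1 - a + a^2 + b^2)^2 := (hda1 b a).deriv

lemma hda2 (b : ℝ) (x : ℝ) : HasDerivAt (fun x => (1 - 2*x)*(1 + b^2)/(1 - x + x^2 + b^2)^2)
    (-2*(1 + b^2)*(3*x*(1 - x) + b^2)/(1 - x + x^2 + b^2)^3) x := by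
  have hD := (Dpos x b).ne'
  have hD2 : ((1 - x + x^2 + b^2)^2) ≠ 0 := pow_ne_zero _ hD
  have h1 : HasDerivAt (fun x : ℝ => (1 - 2*x)*(1 + b^2)) (-2*(1 + b^2)) x := by
    have := ((hasDerivAt_const x (1:ℝ)).sub ((hasDerivAt_id x).const_mul 2)).mul
      (hasDerivAt_const x (1 + b^2))
    exact this.congr_deriv (by simp [id])
  have h2 : HasDerivAt (fun x : ℝ => 1 - x + x^2 + b^2) (-1 + 2*x) x := by
    have := (((hasDerivAt_const x (1:ℝ)).sub (hasDerivAt_id x)).add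
      (hasDerivAt_pow 2 x)).add (hasDerivAt_const x (b^2))
    exact this.congr_deriv (by push_cast; ring)
  have h3 : HasDerivAt (fun x : ℝ => (1 - x + x^2 + b^2)^2)
      (2 * (1 - x + x^2 + b^2) * (-1 + 2*x)) x := by
    have := h2.pow 2
    exact this.congr_deriv (by push_cast; ring)
  have := h1.div h3 hD2
  refine this.congr_deriv ?_
  field_simp
  ring

lemma deriv2 (a b : ℝ) : deriv (deriv (fun x => omegaFn x b)) a
    = -2*(1 + b^2)*(3*a*(1 - a) + b^2)/(1 - a + a^2 + b^2)^3 := by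
  have e : deriv (fun x => omegaFn x b) = fun x => (1 - 2*x)*(1 + b^2)/(1 - x + x^2 + b^2)^2 :=
    funext fun x => (hda1 b x).deriv
  rw [e, (hda2 b a).deriv]

lemma hdb1 (a : ℝ) (y : ℝ) : HasDerivAt (omegaFn a)
    (-2*a*(1 - a)*y/(1 - a + a^2 + y^2)^2) y := by
  have hD := (Dpos a y).ne'
  have h2 : HasDerivAt (fun y : ℝ => 1 - a + a^2 + y^2) (2*y) y := by
    have := (hasDerivAt_const y (1 - a + a^2)).add (hasDerivAt_pow 2 y)
    exact this.congr_deriv (by push_cast; ring)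
  have := (hasDerivAt_const y (a * (1 - a))).div h2 hD
  refine this.congr_deriv ?_
  field_simp
  ring

lemma derivb1 (a b : ℝ) : deriv (omegaFn a) b
    = -2*a*(1 - a)*b/(1 - a + a^2 + b^2)^2 := (hdb1 a b).deriv

lemma hdb2 (a : ℝ) (y : ℝ) : HasDerivAt (fun y => -2*a*(1 - a)*y/(1 - a + a^2 + y^2)^2)
    (-2*a*(1 - a)*(1 - a + a^2 - 3*y^2)/(1 - a + a^2 + y^2)^3) y := by
  have hD := (Dpos a y).ne'
  have hD2 : ((1 - a + a^2 + y^2)^2) ≠ 0 := pow_ne_zero _ hD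
  have h2 : HasDerivAt (fun y : ℝ => 1 - a + a^2 + y^2) (2*y) y := by
    have := (hasDerivAt_const y (1 - a + a^2)).add (hasDerivAt_pow 2 y)
    exact this.congr_deriv (by push_cast; ring)
  have h3 : HasDerivAt (fun y : ℝ => (1 - a + a^2 + y^2)^2)
      (2 * (1 - a + a^2 + y^2) * (2*y)) y := by
    have := h2.pow 2
    exact this.congr_deriv (by push_cast; ring)
  have h1 : HasDerivAt (fun y : ℝ => -2*a*(1 - a)*y) (-2*a*(1 - a)) y := by
    have := (hasDerivAt_id y).const_mul (-2*a*(1 - a))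
    exact this.congr_deriv (by simp [id])
  have := h1.div h3 hD2
  refine this.congr_deriv ?_
  field_simp
  ring

lemma derivb2 (a b : ℝ) : deriv (deriv (omegaFn a)) b
    = -2*a*(1 - a)*(1 - a + a^2 - 3*b^2)/(1 - a + a^2 + b^2)^3 := by
  have e : deriv (omegaFn a) = fun y => -2*a*(1 - a)*y/(1 - a + a^2 + y^2)^2 :=
    funext fun y => (hdb1 a y).deriv
  rw [e, (hdb2 a b).deriv]

set_option maxHeartbeats 1600000 in
theorem omega_bounds (a b : ℝ) (ha0 : 0 ≤ a) (ha : a ≤ 1/2) (hb0 : 0 < b) (hb : b ≤ 1) :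
    omegaFn a b ≤ 4*a*(1 - a)*(7 - 4*b^2)/21 ∧
    (1 - 2*a)/2 ≤ deriv (fun x => omegaFn x b) a ∧
    deriv (fun x => omegaFn x b) a ≤ 4*(1 - 2*a)*(2 - b^2 + 5*a*(1 - a))/7 ∧
    -2*(11*a*(1 - a) + 2*b^2)/(7*b^2) ≤ deriv (deriv (fun x => omegaFn x b)) a ∧
    -1/(6*b) ≤ deriv (omegaFn a) b ∧
    deriv (omegaFn a) b ≤ -a*(1 - a)*b/2 ∧
    -(24 - 64*a*(1 - a) - 17*b^2)/(44*b^2) ≤ deriv (deriv (omegaFn a)) b := by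
  have hD : (0:ℝ) < 1 - a + a^2 + b^2 := Dpos a b
  have hD2 : (0:ℝ) < (1 - a + a^2 + b^2)^2 := by positivity
  have hD3 : (0:ℝ) < (1 - a + a^2 + b^2)^3 := by positivity
  have hs0 : 0 ≤ a * (1 - a) := by nlinarith
  have hs : a * (1 - a) ≤ 1/4 := by nlinarith [sq_nonneg (a - 1/2)]
  have ht0 : 0 < b^2 := by positivity
  have ht : b^2 ≤ 1 := by nlinarith
  have h2a : 0 ≤ 1 - 2*a := by linarith
  rw [deriv1, deriv2, derivb1, derivb2, omegaFn]
  refine ⟨?_, ?_, ?_, ?_, ?_, ?_, ?_⟩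
  · 
    rw [div_le_div_iff₀ hD (by norm_num)]
    have key : 21 ≤ 4*(7 - 4*b^2)*(1 - a + a^2 + b^2) := by
      nlinarith [mul_nonneg (by nlinarith : (0:ℝ) ≤ 7 - 4*b^2) (sub_nonneg.2 hs),
        mul_nonneg ht0.le (sub_nonneg.2 ht), sq_nonneg (a - 1/2)]
    nlinarith [mul_nonneg hs0 (sub_nonneg.2 key)]
  
  · rw [div_le_div_iff₀ (by norm_num) hD2]
    nlinarith [mul_nonneg h2a hs0, mul_nonneg (mul_nonneg h2a hs0) ht0.le,
      mul_nonneg (mul_nonneg h2a hs0) hs0, mul_nonneg h2a ht0.le,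
      mul_nonneg (mul_nonneg h2a ht0.le) (sub_nonneg.2 ht)]
  · rw [div_le_div_iff₀ hD2 (by norm_num)]
    nlinarith [mul_nonneg h2a hs0, mul_nonneg (mul_nonneg h2a hs0) ht0.le,
      mul_nonneg (mul_nonneg h2a hs0) hs0, mul_nonneg h2a ht0.le,
      mul_nonneg (mul_nonneg h2a ht0.le) (sub_nonneg.2 ht),
      mul_nonneg (mul_nonneg (mul_nonneg h2a ht0.le) ht0.le) (sub_nonneg.2 ht),
      mul_nonneg (mul_nonneg (mul_nonneg h2a hs0) hs0) hs0,
      mul_nonneg (mul_nonneg (mul_nonneg h2a hs0) ht0.le) (sub_nonneg.2 ht)]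
  · 
    rw [div_le_div_iff₀ (by positivity) hD3]
    have hq : (0:ℝ) ≤ 1/4 - a*(1 - a) := sub_nonneg.2 hs
    have hw : (0:ℝ) ≤ 1 - b^2 := sub_nonneg.2 ht
    nlinarith [mul_nonneg (mul_nonneg (mul_nonneg (pow_nonneg hs0 1) (pow_nonneg hq 0)) (pow_nonneg ht0.le 1)) (pow_nonneg hw 2), mul_nonneg (mul_nonneg (mul_nonneg (pow_nonneg hs0 0) (pow_nonneg hq 0)) (pow_nonneg ht0.le 1)) (pow_nonneg hw 2), mul_nonneg (mul_nonneg (mul_nonneg (pow_nonneg hs0 0) (pow_nonneg hq 0)) (pow_nonneg ht0.le 2)) (pow_nonneg hw 2), mul_nonneg (mul_nonneg (mul_nonneg (pow_nonneg hs0 0) (pow_nonneg hq 0)) (pow_nonneg ht0.le 1)) (pow_nonneg hw 0), mul_nonneg (mul_nonneg (mul_nonneg (pow_nonneg hs0 1) (pow_nonneg hq 0)) (pow_nonneg ht0.le 0)) (pow_nonneg hw 2), mul_nonneg (mul_nonneg (mul_nonneg (pow_nonneg hs0 1) (pow_nonneg hq 1)) (pow_nonneg ht0.le 1)) (pow_nonneg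 hw 0), mul_nonneg (mul_nonneg (mul_nonneg (pow_nonneg hs0 0) (pow_nonneg hq 2)) (pow_nonneg ht0.le 1)) (pow_nonneg hw 1), mul_nonneg (mul_nonneg (mul_nonneg (pow_nonneg hs0 0) (pow_nonneg hq 0)) (pow_nonneg ht0.le 4)) (pow_nonneg hw 0), mul_nonneg (mul_nonneg (mul_nonneg (pow_nonneg hs0 1) (pow_nonneg hq 1)) (pow_nonneg ht0.le 0)) (pow_nonneg hw 0), mul_nonneg (mul_nonneg (mul_nonneg (pow_nonneg hs0 1) (pow_nonneg hq 2)) (pow_nonneg ht0.le 1)) (pow_nonneg hw 0), mul_nonneg (mul_nonneg (mul_nonneg (pow_nonneg hs0 0) (pow_nonneg hq 1)) (pow_nonneg ht0.le 3)) (pow_nonneg hw 0), mul_nonneg (mul_nonneg (mul_nonneg (pow_nonneg hs0 1) (pow_nonneg hq 2)) (pow_nonneg ht0.le 0)) (pow_nonneg hw 0), mul_nonneg (mul_nonneg (mul_nonneg (pow_nonneg hs0 1) (pow_nonneg hq 3)) (pow_nonneg ht0.le 0)) (pow_nonneg hw 0), mul_nonneg (mul_nonneg (mul_nonneg (pow_nonneg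 hs0 0) (pow_nonneg hq 1)) (pow_nonneg ht0.le 1)) (pow_nonneg hw 0)]
  
  · 
    rw [div_le_div_iff₀ (by positivity) hD2]
    nlinarith [mul_pos hb0 ht0, mul_nonneg hb0.le (sq_nonneg (b^2 - 3/4)),
      mul_nonneg (mul_nonneg (sub_nonneg.2 hs) hb0.le) ht0.le,
      mul_nonneg (mul_nonneg (sub_nonneg.2 hs) hb0.le) (sub_nonneg.2 hs),
      mul_nonneg (sub_nonneg.2 hs) hb0.le]
  
  · 
    rw [div_le_div_iff₀ hD2 (by norm_num)]
    have h2D : (0:ℝ) ≤ 1 + a - a^2 - b^2 := by nlinarith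
    nlinarith [mul_nonneg (mul_nonneg (mul_nonneg hs0 hb0.le) h2D) hD.le,
      mul_nonneg (mul_nonneg hs0 hb0.le) h2D]
  
  · 
    rw [div_le_div_iff₀ (by positivity) hD3]
    nlinarith [mul_nonneg (sub_nonneg.2 hs) ht0.le,
      mul_nonneg (mul_nonneg (sub_nonneg.2 hs) ht0.le) ht0.le,
      mul_nonneg (mul_nonneg hs0 ht0.le) ht0.le,
      mul_nonneg (mul_nonneg (sub_nonneg.2 hs) ht0.le) (sub_nonneg.2 ht),
      mul_nonneg (mul_nonneg hs0 ht0.le) (sub_nonneg.2 ht),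
      mul_nonneg (mul_nonneg (mul_nonneg hs0 ht0.le) ht0.le) (sub_nonneg.2 ht),
      mul_nonneg (mul_nonneg (mul_nonneg (sub_nonneg.2 hs) ht0.le) ht0.le) (sub_nonneg.2 ht),
      mul_nonneg (mul_nonneg hs0 hs0) ht0.le,
      mul_nonneg (mul_nonneg (sub_nonneg.2 hs) (sub_nonneg.2 hs)) ht0.le,
      mul_nonneg ht0.le (sq_nonneg (b^2 - 1))]
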